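/- arXiv:quant-ph/0409091 — 4 statements merged into one kernel-verified Lean document; each statement's English description precedes it below -/
import Mathlib

section
/- Consider the coordination game where φ ∈ {0, π/4} and ψ ∈ {−π/8, π/8} are independent uniform random states, each player plays an action in {0,1}, and the players win (payoff 1) iff their actions are opposite, except when (φ, ψ) = (π/4, −π/8), in which case they win iff their actions are equal. For any deterministic strategy pair (functions a : {0, π/4} → {0,1}, b : {−π/8, π/8} → {0,1}), the probability of winning is at most 3/4, and this bound is attained (e.g., by a ≡ 0, b ≡ 1). -/
/-- States of nature: player A's state index `0 ↦ φ = 0`, `1 ↦ φ = π/4`;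
player B's state index `0 ↦ ψ = −π/8`, `1 ↦ ψ = π/8`.  The players win iff they
play opposite actions, except on the state pair `(π/4, −π/8)` (indices `(1,0)`)
where they must play equal actions. -/
def winCond (φ ψ aφ bψ : Fin 2) : Bool :=
  if φ = 1 ∧ ψ = 0 then aφ = bψ else aφ ≠ bψ

/-- Winning probability of a deterministic strategy pair under independent
uniform states. -/
noncomputable def classicalWinProb (a b : Fin 2 → Fin 2) : ℝ :=
  (1 / 4) * ∑ φ : Fin 2, ∑ ψ : Fin 2,
    (if winCond φ ψ (a φ) (b ψ) then (1 : ℝ) else 0)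

/-- Any deterministic classical strategy wins with probability at most 3/4, and
the bound is attained by `a ≡ 0`, `b ≡ 1`. -/
theorem classical_bound :
    (∀ a b : Fin 2 → Fin 2, classicalWinProb a b ≤ 3 / 4) ∧
    classicalWinProb (fun _ => 0) (fun _ => 1) = 3 / 4 := by
  constructor
  · intro a b
    unfold classicalWinProb winCond
    simp only [Fin.sum_univ_two]
    rcases Fin.exists_fin_two.mp ⟨a 0, rfl⟩ with h0 | h0 <;>
    rcases Fin.exists_fin_two.mp ⟨a 1, rfl⟩ with h1 | h1 <;>
    rcases Fin.exists_fin_two.mp ⟨b 0, rfl⟩ with h2 | h2 <;>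
    rcases Fin.exists_fin_two.mp ⟨b 1, rfl⟩ with h3 | h3 <;>
      rw [h0, h1, h2, h3] <;> norm_num
  · unfold classicalWinProb winCond
    simp only [Fin.sum_univ_two]
    norm_num
end

section
/- If random variables (φ, ψ, s, t) taking values in finite sets are classically generated, then they are disjoint, i.e., P(ψ | φ, s) = P(ψ | φ) and P(φ | ψ, t) = P(φ | ψ) (whenever the conditioning events have positive probability). -/
variable {S T Φ Ψ : Type*} [Fintype S] [Fintype T] [Fintype Φ] [Fintype Ψ]

/-- `p` is a joint probability distribution of `(s, t, φ, ψ)`. -/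
def IsDist (p : S → T → Φ → Ψ → ℝ) : Prop :=
  (∀ s t φ ψ, 0 ≤ p s t φ ψ) ∧ ∑ s, ∑ t, ∑ φ, ∑ ψ, p s t φ ψ = 1

/-- Marginal `p(φ)`. -/
def mΦ (p : S → T → Φ → Ψ → ℝ) (φ : Φ) : ℝ := ∑ s, ∑ t, ∑ ψ, p s t φ ψ
/-- Marginal `p(ψ)`. -/
def mΨ (p : S → T → Φ → Ψ → ℝ) (ψ : Ψ) : ℝ := ∑ s, ∑ t, ∑ φ, p s t φ ψ
/-- Marginal `p(t)`. -/
def mT (p : S → T → Φ → Ψ → ℝ) (t : T) : ℝ := ∑ s, ∑ φ, ∑ ψ, p s t φ ψ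
/-- Marginal `p(φ, ψ)`. -/
def mΦΨ (p : S → T → Φ → Ψ → ℝ) (φ : Φ) (ψ : Ψ) : ℝ := ∑ s, ∑ t, p s t φ ψ
/-- Marginal `p(φ, s)`. -/
def mΦS (p : S → T → Φ → Ψ → ℝ) (φ : Φ) (s : S) : ℝ := ∑ t, ∑ ψ, p s t φ ψ
/-- Marginal `p(ψ, t)`. -/
def mΨT (p : S → T → Φ → Ψ → ℝ) (ψ : Ψ) (t : T) : ℝ := ∑ s, ∑ φ, p s t φ ψ
/-- Marginal `p(ψ, φ, s)`. -/
def mΨΦS (p : S → T → Φ → Ψ → ℝ) (ψ : Ψ) (φ : Φ) (s : S) : ℝ := ∑ t, p s t φ ψ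
/-- Marginal `p(φ, ψ, t)`. -/
def mΦΨT (p : S → T → Φ → Ψ → ℝ) (φ : Φ) (ψ : Ψ) (t : T) : ℝ := ∑ s, p s t φ ψ
/-- Marginal `p(t, φ)`. -/
def mTΦ (p : S → T → Φ → Ψ → ℝ) (t : T) (φ : Φ) : ℝ := ∑ s, ∑ ψ, p s t φ ψ
/-- Marginal `p(s, t, φ)`. -/
def mSTΦ (p : S → T → Φ → Ψ → ℝ) (s : S) (t : T) (φ : Φ) : ℝ := ∑ ψ, p s t φ ψ

/-- `φ` and `ψ` are independent under `p`. -/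
def IndepStates (p : S → T → Φ → Ψ → ℝ) : Prop :=
  ∀ φ ψ, mΦΨ p φ ψ = mΦ p φ * mΨ p ψ

/-- The signals are disjoint: `P(ψ | φ, s) = P(ψ | φ)` and `P(φ | ψ, t) = P(φ | ψ)`
whenever the conditioning events have positive probability. -/
def Disjoint' (p : S → T → Φ → Ψ → ℝ) : Prop :=
  (∀ ψ φ s, 0 < mΦS p φ s →
      mΨΦS p ψ φ s / mΦS p φ s = mΦΨ p φ ψ / mΦ p φ) ∧
  (∀ φ ψ t, 0 < mΨT p ψ t →
      mΦΨT p φ ψ t / mΨT p ψ t = mΦΨ p φ ψ / mΨ p ψ)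

/-- The signals are classically generated: there is a finitely-valued shared
random variable `x` (with distribution `μ`), independent of `(φ, ψ)`, and
response kernels `f(s | x, φ)`, `g(t | x, ψ)` such that the joint distribution
is `p(s,t,φ,ψ) = p(φ) p(ψ) ∑_x μ(x) f(s|x,φ) g(t|x,ψ)`; equivalently
`p(s,t | x, φ, ψ) = p(s | x, φ) · p(t | x, ψ)` with `x ⊥ (φ, ψ)`. -/
def ClassicallyGenerated (p : S → T → Φ → Ψ → ℝ) : Prop :=
  ∃ (k : ℕ) (μ : Fin k → ℝ) (f : Fin k → Φ → S → ℝ) (g : Fin k → Ψ → T → ℝ),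
    (∀ x, 0 ≤ μ x) ∧ (∑ x, μ x = 1) ∧
    (∀ x φ s, 0 ≤ f x φ s) ∧ (∀ x φ, ∑ s, f x φ s = 1) ∧
    (∀ x ψ t, 0 ≤ g x ψ t) ∧ (∀ x ψ, ∑ t, g x ψ t = 1) ∧
    (∀ s t φ ψ, p s t φ ψ = mΦ p φ * mΨ p ψ * ∑ x, μ x * f x φ s * g x ψ t)

/-- Classically generated signals are disjoint. -/
theorem classicallyGenerated_disjoint (p : S → T → Φ → Ψ → ℝ)
    (hp : IsDist p) (hcg : ClassicallyGenerated p) : Disjoint' p := by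
  obtain ⟨hpos, hsum⟩ := hp
  obtain ⟨k, μ, f, g, hμ0, hμ1, hf0, hf1, hg0, hg1, hpe⟩ := hcg
  have hΦnn : ∀ φ, 0 ≤ mΦ p φ := fun φ => by
    apply Finset.sum_nonneg; intro s _
    apply Finset.sum_nonneg; intro t _
    exact Finset.sum_nonneg fun ψ _ => hpos s t φ ψ
  have hΨnn : ∀ ψ, 0 ≤ mΨ p ψ := fun ψ => by
    apply Finset.sum_nonneg; intro s _
    apply Finset.sum_nonneg; intro t _
    exact Finset.sum_nonneg fun φ _ => hpos s t φ ψ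
  have hΨsum : ∑ ψ, mΨ p ψ = 1 := by
    rw [← hsum]
    calc ∑ ψ, ∑ s, ∑ t, ∑ φ, p s t φ ψ
        = ∑ s, ∑ ψ, ∑ t, ∑ φ, p s t φ ψ := Finset.sum_comm
      _ = ∑ s, ∑ t, ∑ ψ, ∑ φ, p s t φ ψ :=
          Finset.sum_congr rfl fun _ _ => Finset.sum_comm
      _ = ∑ s, ∑ t, ∑ φ, ∑ ψ, p s t φ ψ :=
          Finset.sum_congr rfl fun _ _ =>
            Finset.sum_congr rfl fun _ _ => Finset.sum_comm
  have hΦsum : ∑ φ, mΦ p φ = 1 := by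
    rw [← hsum]
    calc ∑ φ, ∑ s, ∑ t, ∑ ψ, p s t φ ψ
        = ∑ s, ∑ φ, ∑ t, ∑ ψ, p s t φ ψ := Finset.sum_comm
      _ = ∑ s, ∑ t, ∑ φ, ∑ ψ, p s t φ ψ :=
          Finset.sum_congr rfl fun _ _ => Finset.sum_comm
  have key1 : ∀ ψ φ s, mΨΦS p ψ φ s = mΦ p φ * mΨ p ψ * ∑ x, μ x * f x φ s := by
    intro ψ φ s
    simp only [mΨΦS, hpe, ← Finset.mul_sum]
    congr 1
    calc ∑ t, ∑ x, μ x * f x φ s * g x ψ t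
        = ∑ x, ∑ t, μ x * f x φ s * g x ψ t := Finset.sum_comm
      _ = ∑ x, μ x * f x φ s * ∑ t, g x ψ t := by
          exact Finset.sum_congr rfl fun x _ => (Finset.mul_sum _ _ _).symm
      _ = ∑ x, μ x * f x φ s := by simp [hg1]
  have key2 : ∀ φ s, mΦS p φ s = mΦ p φ * ∑ x, μ x * f x φ s := by
    intro φ s
    have : mΦS p φ s = ∑ ψ, mΨΦS p ψ φ s := Finset.sum_comm
    rw [this]
    simp only [key1]
    rw [← Finset.sum_mul, ← Finset.mul_sum, hΨsum, mul_one]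
  have key4 : ∀ φ ψ t, mΦΨT p φ ψ t = mΦ p φ * mΨ p ψ * ∑ x, μ x * g x ψ t := by
    intro φ ψ t
    simp only [mΦΨT, hpe, ← Finset.mul_sum]
    congr 1
    calc ∑ s, ∑ x, μ x * f x φ s * g x ψ t
        = ∑ x, ∑ s, μ x * f x φ s * g x ψ t := Finset.sum_comm
      _ = ∑ x, μ x * (∑ s, f x φ s) * g x ψ t := by
          refine Finset.sum_congr rfl fun x _ => ?_
          rw [Finset.mul_sum, Finset.sum_mul]
      _ = ∑ x, μ x * g x ψ t := by simp [hf1]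
  have key3 : ∀ φ ψ, mΦΨ p φ ψ = mΦ p φ * mΨ p ψ := by
    intro φ ψ
    have : mΦΨ p φ ψ = ∑ t, mΦΨT p φ ψ t := Finset.sum_comm
    rw [this]
    simp only [key4]
    rw [← Finset.mul_sum]
    calc mΦ p φ * mΨ p ψ * ∑ t, ∑ x, μ x * g x ψ t
        = mΦ p φ * mΨ p ψ * ∑ x, ∑ t, μ x * g x ψ t := by rw [Finset.sum_comm]
      _ = mΦ p φ * mΨ p ψ * ∑ x, μ x * ∑ t, g x ψ t := by
          rw [show (∑ x, ∑ t, μ x * g x ψ t) = ∑ x, μ x * ∑ t, g x ψ t from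
            Finset.sum_congr rfl fun x _ => (Finset.mul_sum _ _ _).symm]
      _ = mΦ p φ * mΨ p ψ := by simp [hg1, hμ1]
  have key5 : ∀ ψ t, mΨT p ψ t = mΨ p ψ * ∑ x, μ x * g x ψ t := by
    intro ψ t
    have : mΨT p ψ t = ∑ φ, mΦΨT p φ ψ t := Finset.sum_comm
    rw [this]
    simp only [key4]
    rw [← Finset.sum_mul, ← Finset.sum_mul, hΦsum, one_mul]
  constructor
  · intro ψ φ s hΦS
    have hA : 0 < ∑ x, μ x * f x φ s := by
      rcases (mul_pos_iff.mp (key2 φ s ▸ hΦS)) with ⟨_, h⟩ | ⟨h, _⟩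
      · exact h
      · exact absurd h (not_lt.mpr (hΦnn φ))
    have hΦ : 0 < mΦ p φ := by
      rcases (mul_pos_iff.mp (key2 φ s ▸ hΦS)) with ⟨h, _⟩ | ⟨h, _⟩
      · exact h
      · exact absurd h (not_lt.mpr (hΦnn φ))
    rw [key1, key2, key3]
    field_simp
  · intro φ ψ t hΨT
    have hB : 0 < ∑ x, μ x * g x ψ t := by
      rcases (mul_pos_iff.mp (key5 ψ t ▸ hΨT)) with ⟨_, h⟩ | ⟨h, _⟩
      · exact h
      · exact absurd h (not_lt.mpr (hΨnn ψ))
    have hΨ : 0 < mΨ p ψ := by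
      rcases (mul_pos_iff.mp (key5 ψ t ▸ hΨT)) with ⟨h, _⟩ | ⟨h, _⟩
      · exact h
      · exact absurd h (not_lt.mpr (hΨnn ψ))
    rw [key4, key5, key3]
    field_simp
end

section
/- Let p(s,t,φ,ψ) be a joint distribution of disjoint signals with φ, ψ independent, and suppose the payoff function depends only on (s, t, φ): π = π(s,t,φ). Define p̃(s,t,φ,ψ) = p(s,t,φ)·p(ψ). Then: (1) p̃ is state-consistent, i.e., its (φ,ψ)-marginal equals p(φ)p(ψ); (2) the expected payoff under p̃ equals the expected payoff under p: ∑_{s,t,φ,ψ} π(s,t,φ) p̃(s,t,φ,ψ) = ∑_{s,t,φ,ψ} π(s,t,φ) p(s,t,φ,ψ); and (3) the variables under p̃ are classically generated (with x = t as the shared randomness). -/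
variable {S T Φ Ψ : Type*} [Fintype S] [Fintype T] [Fintype Φ] [Fintype Ψ]

/-!
Summing out `ψ` leaves `p(s,t,φ)` unchanged, so `p̃` has the same `(s,t,φ)`-marginal as `p`, and
hence the same expected payoff. Disjointness (`t` carries no information on `φ` beyond `ψ`) and
independence of the states give `p(φ,ψ,t) = p(φ) p(ψ,t)`, so `t` is independent of `φ`. Therefore
`p̃ = p(φ) p(ψ) p(t) p(s | t, φ)`, which is generated by the shared variable `x = t`: the first
player samples `s` from `p(s | x, φ)` and the second answers `t = x`.
-/

open Finset

section Marginals

variable {p : S → T → Φ → Ψ → ℝ}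

lemma IsDist.nonempty_left (hp : IsDist p) : Nonempty S := by
  by_contra hS
  have := hp.2
  simp [not_nonempty_iff.mp hS] at this

lemma IsDist.mSTΦ_nonneg (hp : IsDist p) (s : S) (t : T) (φ : Φ) : 0 ≤ mSTΦ p s t φ :=
  sum_nonneg fun ψ _ => hp.1 s t φ ψ

lemma IsDist.mT_nonneg (hp : IsDist p) (t : T) : 0 ≤ mT p t :=
  sum_nonneg fun s _ => sum_nonneg fun φ _ => sum_nonneg fun ψ _ => hp.1 s t φ ψ

lemma IsDist.mΨT_nonneg (hp : IsDist p) (ψ : Ψ) (t : T) : 0 ≤ mΨT p ψ t :=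
  sum_nonneg fun s _ => sum_nonneg fun φ _ => hp.1 s t φ ψ

lemma IsDist.sum_mΨ (hp : IsDist p) : ∑ ψ, mΨ p ψ = 1 := by
  simp only [mΨ, ← hp.2, Finset.sum_comm (γ := Ψ)]

lemma IsDist.sum_mT (hp : IsDist p) : ∑ t, mT p t = 1 := by
  rw [← hp.2]
  exact Finset.sum_comm

lemma IsDist.mΦΨT_le_mΨT (hp : IsDist p) (φ : Φ) (ψ : Ψ) (t : T) :
    mΦΨT p φ ψ t ≤ mΨT p ψ t := by
  rw [mΨT, Finset.sum_comm]
  exact single_le_sum (fun φ _ => sum_nonneg fun s _ => hp.1 s t φ ψ) (mem_univ φ)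

lemma IsDist.mΨT_le_mΨ (hp : IsDist p) (ψ : Ψ) (t : T) : mΨT p ψ t ≤ mΨ p ψ := by
  rw [mΨ, Finset.sum_comm]
  exact single_le_sum (fun t _ => hp.mΨT_nonneg ψ t) (mem_univ t)

lemma IsDist.mΦΨT_eq_mul (hp : IsDist p) (hindep : IndepStates p) (hdisj : Disjoint' p)
    (φ : Φ) (ψ : Ψ) (t : T) : mΦΨT p φ ψ t = mΦ p φ * mΨT p ψ t := by
  rcases (hp.mΨT_nonneg ψ t).eq_or_lt with hzero | hpos
  · rw [← hzero, mul_zero]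
    exact le_antisymm ((hp.mΦΨT_le_mΨT φ ψ t).trans hzero.ge)
      (sum_nonneg fun s _ => hp.1 s t φ ψ)
  · have hψ : mΨ p ψ ≠ 0 := (hpos.trans_le (hp.mΨT_le_mΨ ψ t)).ne'
    have h := hdisj.2 φ ψ t hpos
    rwa [hindep, mul_div_cancel_right₀ _ hψ, div_eq_iff hpos.ne'] at h

lemma IsDist.mTΦ_eq_mul (hp : IsDist p) (hindep : IndepStates p) (hdisj : Disjoint' p)
    (t : T) (φ : Φ) : mTΦ p t φ = mΦ p φ * mT p t := by
  calc mTΦ p t φ = ∑ ψ, mΦΨT p φ ψ t := Finset.sum_comm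
    _ = ∑ ψ, mΦ p φ * mΨT p ψ t := sum_congr rfl fun ψ _ => hp.mΦΨT_eq_mul hindep hdisj φ ψ t
    _ = mΦ p φ * mT p t := by
      rw [← mul_sum, mT]
      exact congrArg _ (Finset.sum_comm.trans (sum_congr rfl fun s _ => Finset.sum_comm))

end Marginals

lemma sum_payoff_eq_sum_mSTΦ (q : S → T → Φ → Ψ → ℝ) (π : S → T → Φ → ℝ) :
    ∑ s, ∑ t, ∑ φ, ∑ ψ, π s t φ * q s t φ ψ = ∑ s, ∑ t, ∑ φ, π s t φ * mSTΦ q s t φ := by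
  simp only [mSTΦ, mul_sum]

/-- Shared randomness `x = t`, with the second player answering `t = x`. -/
lemma classicallyGenerated_of_eq_mul_kernel {q : S → T → Φ → Ψ → ℝ} (μ : T → ℝ)
    (f : T → Φ → S → ℝ) (hμ : ∀ t, 0 ≤ μ t) (hμ_sum : ∑ t, μ t = 1)
    (hf : ∀ t φ s, 0 ≤ f t φ s) (hf_sum : ∀ t φ, ∑ s, f t φ s = 1)
    (hq : ∀ s t φ ψ, q s t φ ψ = mΦ q φ * mΨ q ψ * (μ t * f t φ s)) :
    ClassicallyGenerated q := by
  classical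
  let e : Fin (Fintype.card T) ≃ T := (Fintype.equivFin T).symm
  refine ⟨Fintype.card T, fun x => μ (e x), fun x => f (e x), fun x _ t => if e x = t then 1 else 0,
    fun x => hμ (e x), by rw [e.sum_comp μ, hμ_sum], fun x => hf (e x), fun x => hf_sum (e x),
    fun x _ t => by positivity, fun x _ => by simp, fun s t φ ψ => ?_⟩
  rw [hq, e.sum_comp (fun t' => μ t' * f t' φ s * if t' = t then 1 else 0)]
  simp

def decoupleΨ (p : S → T → Φ → Ψ → ℝ) : S → T → Φ → Ψ → ℝ :=
  fun s t φ ψ => mSTΦ p s t φ * mΨ p ψ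

/-- The law of `s` given `(t, φ)`; where `p(t, φ) = 0` it is undefined and any point mass
will do. -/
noncomputable def condS [DecidableEq S] (p : S → T → Φ → Ψ → ℝ) (s₀ : S) (t : T) (φ : Φ)
    (s : S) : ℝ :=
  if mTΦ p t φ = 0 then (if s = s₀ then 1 else 0) else mSTΦ p s t φ / mTΦ p t φ

section CondS

variable [DecidableEq S] {p : S → T → Φ → Ψ → ℝ}

lemma IsDist.condS_nonneg (hp : IsDist p) (s₀ : S) (t : T) (φ : Φ) (s : S) :
    0 ≤ condS p s₀ t φ s := by
  unfold condS
  split_ifs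
  · exact zero_le_one
  · exact le_rfl
  · exact div_nonneg (hp.mSTΦ_nonneg s t φ) (sum_nonneg fun s _ => hp.mSTΦ_nonneg s t φ)

omit [Fintype T] [Fintype Φ] in
lemma sum_condS (p : S → T → Φ → Ψ → ℝ) (s₀ : S) (t : T) (φ : Φ) :
    ∑ s, condS p s₀ t φ s = 1 := by
  by_cases h : mTΦ p t φ = 0
  · simp [condS, h]
  · simp only [condS, if_neg h, ← sum_div]
    exact div_self h

lemma IsDist.mSTΦ_eq_mul_condS (hp : IsDist p) (s₀ : S) (s : S) (t : T) (φ : Φ) :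
    mSTΦ p s t φ = mTΦ p t φ * condS p s₀ t φ s := by
  by_cases h : mTΦ p t φ = 0
  · rw [h, zero_mul]
    change ∑ s, mSTΦ p s t φ = 0 at h
    rw [sum_eq_zero_iff_of_nonneg fun s _ => hp.mSTΦ_nonneg s t φ] at h
    exact h s (mem_univ s)
  · rw [condS, if_neg h, mul_div_cancel₀ _ h]

end CondS

section Decouple

variable {p : S → T → Φ → Ψ → ℝ}

lemma mΦΨ_decoupleΨ (p : S → T → Φ → Ψ → ℝ) (φ : Φ) (ψ : Ψ) :
    mΦΨ (decoupleΨ p) φ ψ = mΦ p φ * mΨ p ψ := by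
  simp only [mΦΨ, decoupleΨ, ← sum_mul]
  rfl

lemma IsDist.mSTΦ_decoupleΨ (hp : IsDist p) (s : S) (t : T) (φ : Φ) :
    mSTΦ (decoupleΨ p) s t φ = mSTΦ p s t φ := by
  simp only [mSTΦ, decoupleΨ, ← mul_sum, hp.sum_mΨ, mul_one]

lemma IsDist.mΦ_decoupleΨ (hp : IsDist p) (φ : Φ) : mΦ (decoupleΨ p) φ = mΦ p φ := by
  show ∑ s, ∑ t, mSTΦ _ s t φ = ∑ s, ∑ t, mSTΦ p s t φ
  simp only [hp.mSTΦ_decoupleΨ]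

lemma IsDist.mΨ_decoupleΨ (hp : IsDist p) (ψ : Ψ) : mΨ (decoupleΨ p) ψ = mΨ p ψ := by
  simp only [mΨ, decoupleΨ, ← sum_mul, mSTΦ, hp.2, one_mul]

lemma IsDist.sum_payoff_decoupleΨ (hp : IsDist p) (π : S → T → Φ → ℝ) :
    ∑ s, ∑ t, ∑ φ, ∑ ψ, π s t φ * decoupleΨ p s t φ ψ =
      ∑ s, ∑ t, ∑ φ, ∑ ψ, π s t φ * p s t φ ψ := by
  simp only [sum_payoff_eq_sum_mSTΦ, hp.mSTΦ_decoupleΨ]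

lemma IsDist.classicallyGenerated_decoupleΨ (hp : IsDist p) (hindep : IndepStates p)
    (hdisj : Disjoint' p) : ClassicallyGenerated (decoupleΨ p) := by
  classical
  obtain ⟨s₀⟩ := hp.nonempty_left
  refine classicallyGenerated_of_eq_mul_kernel (mT p) (condS p s₀) hp.mT_nonneg hp.sum_mT
    (hp.condS_nonneg s₀) (sum_condS p s₀) fun s t φ ψ => ?_
  rw [hp.mΦ_decoupleΨ, hp.mΨ_decoupleΨ, decoupleΨ, hp.mSTΦ_eq_mul_condS s₀,
    hp.mTΦ_eq_mul hindep hdisj]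
  ring

end Decouple

/-- For a payoff depending only on `(s, t, φ)`, the modified distribution
`p̃(s,t,φ,ψ) = p(s,t,φ)·p(ψ)` is state-consistent, achieves the same expected
payoff as `p`, and is classically generated (with `x = t`). -/
theorem payoff_dep_one_state_classical (p : S → T → Φ → Ψ → ℝ)
    (hp : IsDist p) (hindep : IndepStates p) (hdisj : Disjoint' p)
    (π : S → T → Φ → ℝ) :
    (∀ φ ψ, ∑ s, ∑ t, (mSTΦ p s t φ * mΨ p ψ) = mΦ p φ * mΨ p ψ) ∧
    (∑ s, ∑ t, ∑ φ, ∑ ψ, π s t φ * (mSTΦ p s t φ * mΨ p ψ) =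
      ∑ s, ∑ t, ∑ φ, ∑ ψ, π s t φ * p s t φ ψ) ∧
    ClassicallyGenerated (fun s t φ ψ => mSTΦ p s t φ * mΨ p ψ) :=
  ⟨mΦΨ_decoupleΨ p, hp.sum_payoff_decoupleΨ π, hp.classicallyGenerated_decoupleΨ hindep hdisj⟩
end

section
/- If s = f(φ, x) and t = g(ψ, x) for deterministic functions f, g and a random variable x independent of the independent pair (φ, ψ), then the quadruple (φ, ψ, s, t) is classically generated, and hence disjoint: P(ψ | φ, s) = P(ψ) and P(φ | ψ, t) = P(φ). -/
variable {S T Φ Ψ : Type*} [Fintype S] [Fintype T] [Fintype Φ] [Fintype Ψ]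

/-!
Summing the mixture `p(s,t,φ,ψ) = a(φ) b(ψ) ∑ₓ μ(x) F(s|x,φ) G(t|x,ψ)` over `t` kills the kernel
`G`, and summing it further over `ψ` kills `b`; so `p(ψ, φ, s) = a(φ) b(ψ) c(φ, s)` and
`p(φ, s) = a(φ) c(φ, s)` with the same factor `c(φ, s) = ∑ₓ μ(x) F(s|x,φ)`, whose ratio is `b(ψ)`.
Summing out all but `φ` (resp. `ψ`) shows that `a` and `b` are the marginals of `p`, so the mixture
is classically generated.
Deterministic responses `s = f(φ, x)`, `t = g(ψ, x)` are the special case of `0/1`-valued kernels.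
-/

open Finset

section Mixture

variable {ι : Type*} [Fintype ι] {p : S → T → Φ → Ψ → ℝ} {a : Φ → ℝ} {b : Ψ → ℝ}
  {μ : ι → ℝ} {F : ι → Φ → S → ℝ} {G : ι → Ψ → T → ℝ}

theorem mΨΦS_eq_of_mixture
    (hp : ∀ s t φ ψ, p s t φ ψ = a φ * b ψ * ∑ x, μ x * F x φ s * G x ψ t)
    (hG1 : ∀ x ψ, ∑ t, G x ψ t = 1) (ψ : Ψ) (φ : Φ) (s : S) :
    mΨΦS p ψ φ s = a φ * b ψ * ∑ x, μ x * F x φ s := by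
  simp only [mΨΦS, hp, ← mul_sum]
  rw [sum_comm]
  simp only [← mul_sum, hG1, mul_one]

theorem mΦΨT_eq_of_mixture
    (hp : ∀ s t φ ψ, p s t φ ψ = a φ * b ψ * ∑ x, μ x * F x φ s * G x ψ t)
    (hF1 : ∀ x φ, ∑ s, F x φ s = 1) (φ : Φ) (ψ : Ψ) (t : T) :
    mΦΨT p φ ψ t = a φ * b ψ * ∑ x, μ x * G x ψ t := by
  simp only [mΦΨT, hp, ← mul_sum]
  rw [sum_comm]
  simp only [mul_right_comm _ (F _ _ _), ← mul_sum, hF1, mul_one]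

theorem mΦS_eq_of_mixture
    (hp : ∀ s t φ ψ, p s t φ ψ = a φ * b ψ * ∑ x, μ x * F x φ s * G x ψ t)
    (hG1 : ∀ x ψ, ∑ t, G x ψ t = 1) (hb1 : ∑ ψ, b ψ = 1) (φ : Φ) (s : S) :
    mΦS p φ s = a φ * ∑ x, μ x * F x φ s := by
  calc mΦS p φ s = ∑ ψ, mΨΦS p ψ φ s := sum_comm
    _ = a φ * ∑ x, μ x * F x φ s := by
      simp only [mΨΦS_eq_of_mixture hp hG1, ← sum_mul, ← mul_sum, hb1, mul_one]

theorem mΨT_eq_of_mixture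
    (hp : ∀ s t φ ψ, p s t φ ψ = a φ * b ψ * ∑ x, μ x * F x φ s * G x ψ t)
    (hF1 : ∀ x φ, ∑ s, F x φ s = 1) (ha1 : ∑ φ, a φ = 1) (ψ : Ψ) (t : T) :
    mΨT p ψ t = b ψ * ∑ x, μ x * G x ψ t := by
  calc mΨT p ψ t = ∑ φ, mΦΨT p φ ψ t := sum_comm
    _ = b ψ * ∑ x, μ x * G x ψ t := by
      simp only [mΦΨT_eq_of_mixture hp hF1, ← sum_mul, ha1, one_mul]

theorem mΦ_eq_of_mixture
    (hp : ∀ s t φ ψ, p s t φ ψ = a φ * b ψ * ∑ x, μ x * F x φ s * G x ψ t)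
    (hF1 : ∀ x φ, ∑ s, F x φ s = 1) (hG1 : ∀ x ψ, ∑ t, G x ψ t = 1)
    (hμ1 : ∑ x, μ x = 1) (hb1 : ∑ ψ, b ψ = 1) (φ : Φ) :
    mΦ p φ = a φ := by
  calc mΦ p φ = ∑ s, mΦS p φ s := rfl
    _ = a φ := by
      simp only [mΦS_eq_of_mixture hp hG1 hb1, ← mul_sum]
      rw [sum_comm]
      simp only [← mul_sum, hF1, mul_one, hμ1]

theorem mΨ_eq_of_mixture
    (hp : ∀ s t φ ψ, p s t φ ψ = a φ * b ψ * ∑ x, μ x * F x φ s * G x ψ t)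
    (hF1 : ∀ x φ, ∑ s, F x φ s = 1) (hG1 : ∀ x ψ, ∑ t, G x ψ t = 1)
    (hμ1 : ∑ x, μ x = 1) (ha1 : ∑ φ, a φ = 1) (ψ : Ψ) :
    mΨ p ψ = b ψ := by
  calc mΨ p ψ = ∑ t, mΨT p ψ t := sum_comm
    _ = b ψ := by
      simp only [mΨT_eq_of_mixture hp hF1 ha1, ← mul_sum]
      rw [sum_comm]
      simp only [← mul_sum, hG1, mul_one, hμ1]

theorem mΨΦS_div_mΦS_of_mixture
    (hp : ∀ s t φ ψ, p s t φ ψ = a φ * b ψ * ∑ x, μ x * F x φ s * G x ψ t)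
    (hG1 : ∀ x ψ, ∑ t, G x ψ t = 1) (hb1 : ∑ ψ, b ψ = 1) {ψ : Ψ} {φ : Φ} {s : S}
    (hs : mΦS p φ s ≠ 0) :
    mΨΦS p ψ φ s / mΦS p φ s = b ψ := by
  rw [div_eq_iff hs, mΨΦS_eq_of_mixture hp hG1, mΦS_eq_of_mixture hp hG1 hb1]
  ring

theorem mΦΨT_div_mΨT_of_mixture
    (hp : ∀ s t φ ψ, p s t φ ψ = a φ * b ψ * ∑ x, μ x * F x φ s * G x ψ t)
    (hF1 : ∀ x φ, ∑ s, F x φ s = 1) (ha1 : ∑ φ, a φ = 1) {φ : Φ} {ψ : Ψ} {t : T}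
    (ht : mΨT p ψ t ≠ 0) :
    mΦΨT p φ ψ t / mΨT p ψ t = a φ := by
  rw [div_eq_iff ht, mΦΨT_eq_of_mixture hp hF1, mΨT_eq_of_mixture hp hF1 ha1]
  ring

end Mixture

theorem classicallyGenerated_of_mixture {k : ℕ} {p : S → T → Φ → Ψ → ℝ} {a : Φ → ℝ}
    {b : Ψ → ℝ} {μ : Fin k → ℝ} {F : Fin k → Φ → S → ℝ} {G : Fin k → Ψ → T → ℝ}
    (hp : ∀ s t φ ψ, p s t φ ψ = a φ * b ψ * ∑ x, μ x * F x φ s * G x ψ t)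
    (hμ : ∀ x, 0 ≤ μ x) (hμ1 : ∑ x, μ x = 1)
    (hF : ∀ x φ s, 0 ≤ F x φ s) (hF1 : ∀ x φ, ∑ s, F x φ s = 1)
    (hG : ∀ x ψ t, 0 ≤ G x ψ t) (hG1 : ∀ x ψ, ∑ t, G x ψ t = 1)
    (ha1 : ∑ φ, a φ = 1) (hb1 : ∑ ψ, b ψ = 1) :
    ClassicallyGenerated p :=
  ⟨k, μ, F, G, hμ, hμ1, hF, hF1, hG, hG1, fun s t φ ψ => by
    rw [mΦ_eq_of_mixture hp hF1 hG1 hμ1 hb1, mΨ_eq_of_mixture hp hF1 hG1 hμ1 ha1, hp]⟩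

section DeterministicKernel

variable {ι α β : Type*} [DecidableEq β]

def deterministicKernel (f : α → ι → β) (x : ι) (a : α) (b : β) : ℝ :=
  if f a x = b then 1 else 0

theorem deterministicKernel_nonneg (f : α → ι → β) (x : ι) (a : α) (b : β) :
    0 ≤ deterministicKernel f x a b := by
  unfold deterministicKernel
  split_ifs <;> norm_num

theorem sum_deterministicKernel [Fintype β] (f : α → ι → β) (x : ι) (a : α) :
    ∑ b, deterministicKernel f x a b = 1 := by
  simp [deterministicKernel]

end DeterministicKernel

theorem deterministic_functions_classicallyGenerated_general
    [DecidableEq S] [DecidableEq T] (k : ℕ)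
    (pΦ : Φ → ℝ) (pΨ : Ψ → ℝ) (μ : Fin k → ℝ)
    (hpΦ1 : ∑ φ, pΦ φ = 1)
    (hpΨ1 : ∑ ψ, pΨ ψ = 1)
    (hμ : ∀ x, 0 ≤ μ x) (hμ1 : ∑ x, μ x = 1)
    (f : Φ → Fin k → S) (g : Ψ → Fin k → T)
    (p : S → T → Φ → Ψ → ℝ)
    (hpdef : ∀ s t φ ψ, p s t φ ψ = pΦ φ * pΨ ψ *
      ∑ x, μ x * (if f φ x = s then (1 : ℝ) else 0) *
        (if g ψ x = t then (1 : ℝ) else 0)) :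
    ClassicallyGenerated p ∧
    (∀ ψ φ s, 0 < mΦS p φ s → mΨΦS p ψ φ s / mΦS p φ s = pΨ ψ) ∧
    (∀ φ ψ t, 0 < mΨT p ψ t → mΦΨT p φ ψ t / mΨT p ψ t = pΦ φ) := by
  have hp : ∀ s t φ ψ, p s t φ ψ = pΦ φ * pΨ ψ *
      ∑ x, μ x * deterministicKernel f x φ s * deterministicKernel g x ψ t := hpdef
  have hF1 := sum_deterministicKernel f
  have hG1 := sum_deterministicKernel g
  exact ⟨classicallyGenerated_of_mixture hp hμ hμ1 (deterministicKernel_nonneg f) hF1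
      (deterministicKernel_nonneg g) hG1 hpΦ1 hpΨ1,
    fun _ _ _ hs => mΨΦS_div_mΦS_of_mixture hp hG1 hpΨ1 hs.ne',
    fun _ _ _ ht => mΦΨT_div_mΨT_of_mixture hp hF1 hpΦ1 ht.ne'⟩

/-- If `s = f(φ, x)` and `t = g(ψ, x)` for deterministic `f, g` and `x`
independent of the independent pair `(φ, ψ)`, then `(φ, ψ, s, t)` is classically
generated, and hence disjoint, with `P(ψ | φ, s) = P(ψ)` and
`P(φ | ψ, t) = P(φ)`. -/
theorem deterministic_functions_classicallyGenerated
    [DecidableEq S] [DecidableEq T] (k : ℕ)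
    (pΦ : Φ → ℝ) (pΨ : Ψ → ℝ) (μ : Fin k → ℝ)
    (hpΦ : ∀ φ, 0 ≤ pΦ φ) (hpΦ1 : ∑ φ, pΦ φ = 1)
    (hpΨ : ∀ ψ, 0 ≤ pΨ ψ) (hpΨ1 : ∑ ψ, pΨ ψ = 1)
    (hμ : ∀ x, 0 ≤ μ x) (hμ1 : ∑ x, μ x = 1)
    (f : Φ → Fin k → S) (g : Ψ → Fin k → T)
    (p : S → T → Φ → Ψ → ℝ)
    (hpdef : ∀ s t φ ψ, p s t φ ψ = pΦ φ * pΨ ψ *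
      ∑ x, μ x * (if f φ x = s then (1 : ℝ) else 0) *
        (if g ψ x = t then (1 : ℝ) else 0)) :
    ClassicallyGenerated p ∧
    (∀ ψ φ s, 0 < mΦS p φ s → mΨΦS p ψ φ s / mΦS p φ s = pΨ ψ) ∧
    (∀ φ ψ t, 0 < mΨT p ψ t → mΦΨT p φ ψ t / mΨT p ψ t = pΦ φ) :=
  deterministic_functions_classicallyGenerated_general k pΦ pΨ μ hpΦ1 hpΨ1 hμ hμ1 f g p hpdef
end
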